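/- arXiv:1708.01290 — 4 statements merged into one kernel-verified Lean document; each statement's English description precedes it below -/
import Mathlib

section
/- If f and g are orientation-preserving homeomorphisms of [0,1] such that the support of g is a nonempty open interval B properly contained in an orbital A of f, with the closure of B contained in A, and f has no fixed points in A, then f and g do not commute. -/
/-- `f` is an orientation-preserving homeomorphism of `[0,1]`
(extended by the identity outside `[0,1]`). -/
def IsHomeoI (f : ℝ → ℝ) : Prop :=
  StrictMono f ∧ Function.Bijective f ∧ Continuous f ∧ f 0 = 0 ∧ f 1 = 1 ∧
    ∀ x : ℝ, x ≤ 0 ∨ 1 ≤ x → f x = x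

/-- `A` is an orbital of `f`: a maximal open interval contained in the support of `f`. -/
def IsOrbital (f : ℝ → ℝ) (A : Set ℝ) : Prop :=
  (∃ a b : ℝ, a < b ∧ A = Set.Ioo a b) ∧ A ⊆ {x | f x ≠ x} ∧
    ∀ B : Set ℝ, (∃ a b : ℝ, a < b ∧ B = Set.Ioo a b) → B ⊆ {x | f x ≠ x} → A ⊆ B → A = B

/-- If the support of `g` is a nonempty open interval `B = (c,d)` whose closure is
contained in an orbital `A = (a,b)` of `f` (so `f` has no fixed points in `A`),
then `f` and `g` do not commute. -/
theorem stmt3 (f g : ℝ → ℝ) (hf : IsHomeoI f) (hg : IsHomeoI g)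
    (a b c d : ℝ) (hab : a < b) (hcd : c < d)
    (hsupp : {x | g x ≠ x} = Set.Ioo c d)
    (hsubset : Set.Icc c d ⊆ Set.Ioo a b)
    (hfix : ∀ x ∈ Set.Ioo a b, f x ≠ x)
    (horb : IsOrbital f (Set.Ioo a b)) :
    f ∘ g ≠ g ∘ f := by
  intro hcomm
  obtain ⟨hmono, hbij, hcont, -, -, -⟩ := hf
  -- f maps the support of g into itself
  have hmaps : ∀ x ∈ Set.Ioo c d, f x ∈ Set.Ioo c d := by
    intro x hx
    rw [← hsupp] at hx ⊢
    intro h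
    apply hx
    have := congrFun hcomm x
    simp only [Function.comp_apply] at this
    exact hbij.1 (this.trans h)
  have hIcc : Set.Icc c d ⊆ closure (Set.Ioo c d) := by
    rw [closure_Ioo hcd.ne]
  have hfd : f d ≤ d := by
    have hcl : IsClosed {x : ℝ | f x ≤ d} := isClosed_le hcont continuous_const
    have : Set.Icc c d ⊆ {x : ℝ | f x ≤ d} :=
      fun x hx => hcl.closure_subset ((closure_mono (fun y hy => (hmaps y hy).2.le)) (hIcc hx))
    exact this (Set.right_mem_Icc.2 hcd.le)
  have hfc : c ≤ f c := by
    have hcl : IsClosed {x : ℝ | c ≤ f x} := isClosed_le continuous_const hcont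
    have : Set.Icc c d ⊆ {x : ℝ | c ≤ f x} :=
      fun x hx => hcl.closure_subset ((closure_mono (fun y hy => (hmaps y hy).1.le)) (hIcc hx))
    exact this (Set.left_mem_Icc.2 hcd.le)
  have hcA : c ∈ Set.Ioo a b := hsubset (Set.left_mem_Icc.2 hcd.le)
  have hdA : d ∈ Set.Ioo a b := hsubset (Set.right_mem_Icc.2 hcd.le)
  have hfd' : f d < d := lt_of_le_of_ne hfd (hfix d hdA)
  have hfc' : c < f c := lt_of_le_of_ne hfc (Ne.symm (hfix c hcA))
  -- IVT on f x - x
  have hcont2 : ContinuousOn (fun x => f x - x) (Set.Icc c d) :=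
    (hcont.sub continuous_id).continuousOn
  have : (0 : ℝ) ∈ Set.Icc (f d - d) (f c - c) := ⟨by linarith, by linarith⟩
  obtain ⟨x, hxmem, hx⟩ := intermediate_value_Icc' hcd.le hcont2 this
  exact hfix x (hsubset hxmem) (by simpa [sub_eq_zero] using hx)
end

section
/- If f and g in PLo(I) share an orbital A, are equal on neighborhoods of both endpoints of A (as restricted to A), but are not equal on all of A, then f and g do not commute. -/
/-- `f` is an orientation-preserving piecewise-linear homeomorphism of `[0,1]`
(extended by the identity outside `[0,1]`) with finitely many breakpoints. -/
def IsPLo (f : ℝ → ℝ) : Prop :=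
  StrictMono f ∧ Function.Bijective f ∧ f 0 = 0 ∧ f 1 = 1 ∧
    (∀ x : ℝ, x ≤ 0 ∨ 1 ≤ x → f x = x) ∧
    ∃ s : Finset ℝ, ∀ x ∈ Set.Ioo (0:ℝ) 1, x ∉ s →
      ∃ a b : ℝ, ∀ᶠ y in nhds x, f y = a * y + b

/-- An endpoint of an orbital is fixed (left endpoint). -/
lemma fix_left (f : ℝ → ℝ) (hcont : Continuous f) (a b : ℝ) (hab : a < b)
    (horb : IsOrbital f (Set.Ioo a b)) : f a = a := by
  by_contra h
  have hopen : IsOpen {x : ℝ | f x ≠ x} :=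
    isOpen_ne_fun hcont continuous_id
  obtain ⟨ε, εpos, hball⟩ := Metric.isOpen_iff.1 hopen a h
  have hsub : Set.Ioo (a - ε) b ⊆ {x : ℝ | f x ≠ x} := by
    intro x hx
    rcases le_or_gt x a with hxa | hxa
    · exact hball (by rw [Metric.mem_ball, Real.dist_eq, abs_lt]; constructor <;> [linarith [hx.1]; linarith])
    · exact horb.2.1 ⟨hxa, hx.2⟩
  have heq := horb.2.2 (Set.Ioo (a - ε) b) ⟨a - ε, b, by linarith, rfl⟩ hsub
    (Set.Ioo_subset_Ioo (by linarith) le_rfl)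
  have : a ∈ Set.Ioo a b := by rw [heq]; exact ⟨by linarith, hab⟩
  exact lt_irrefl a this.1

/-- An endpoint of an orbital is fixed (right endpoint). -/
lemma fix_right (f : ℝ → ℝ) (hcont : Continuous f) (a b : ℝ) (hab : a < b)
    (horb : IsOrbital f (Set.Ioo a b)) : f b = b := by
  by_contra h
  have hopen : IsOpen {x : ℝ | f x ≠ x} :=
    isOpen_ne_fun hcont continuous_id
  obtain ⟨ε, εpos, hball⟩ := Metric.isOpen_iff.1 hopen b h
  have hsub : Set.Ioo a (b + ε) ⊆ {x : ℝ | f x ≠ x} := by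
    intro x hx
    rcases lt_or_ge x b with hxb | hxb
    · exact horb.2.1 ⟨hx.1, hxb⟩
    · exact hball (by rw [Metric.mem_ball, Real.dist_eq, abs_lt]; constructor <;> [linarith; linarith [hx.2]])
  have heq := horb.2.2 (Set.Ioo a (b + ε)) ⟨a, b + ε, by linarith, rfl⟩ hsub
    (Set.Ioo_subset_Ioo le_rfl (by linarith))
  have : b ∈ Set.Ioo a b := by rw [heq]; exact ⟨hab, by linarith⟩
  exact lt_irrefl b this.2

/-- If `f` and `g` in `PLo(I)` share an orbital `A = (a,b)`, agree near both ends of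
`A` but not on all of `A`, and the set where they differ in `A` has closure contained
in `A`, then `f` and `g` do not commute. -/
theorem stmt8 (f g : ℝ → ℝ) (hf : IsPLo f) (hg : IsPLo g) (a b : ℝ) (hab : a < b)
    (hforb : IsOrbital f (Set.Ioo a b)) (hgorb : IsOrbital g (Set.Ioo a b))
    (hleft : ∃ u ∈ Set.Ioo a b, ∀ y ∈ Set.Ioo a u, f y = g y)
    (hright : ∃ v ∈ Set.Ioo a b, ∀ y ∈ Set.Ioo v b, f y = g y)
    (hne : ∃ z ∈ Set.Ioo a b, f z ≠ g z)
    (hcl : closure {x ∈ Set.Ioo a b | f x ≠ g x} ⊆ Set.Ioo a b) :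
    f ∘ g ≠ g ∘ f := by
  intro hcomm
  have hmono : StrictMono f := hf.1
  have hcont : Continuous f := hmono.monotone.continuous_of_surjective hf.2.1.2
  have hfa : f a = a := fix_left f hcont a b hab hforb
  have hfb : f b = b := fix_right f hcont a b hab hforb
  -- f maps (a,b) to itself, bijectively
  have hmem : ∀ x : ℝ, f x ∈ Set.Ioo a b ↔ x ∈ Set.Ioo a b := by
    intro x
    constructor
    · rintro ⟨h1, h2⟩
      rw [← hfa] at h1; rw [← hfb] at h2
      exact ⟨hmono.lt_iff_lt.1 h1, hmono.lt_iff_lt.1 h2⟩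
    · rintro ⟨h1, h2⟩
      exact ⟨hfa ▸ hmono h1, hfb ▸ hmono h2⟩
  set S : Set ℝ := {x ∈ Set.Ioo a b | f x ≠ g x} with hS
  -- membership in S is preserved by f
  have hkey : ∀ x : ℝ, x ∈ S ↔ f x ∈ S := by
    intro x
    have hc : f (g x) = g (f x) := congrFun hcomm x
    constructor
    · rintro ⟨hx, hne'⟩
      refine ⟨(hmem x).2 hx, ?_⟩
      rw [← hc]
      exact fun hEq => hne' (hmono.injective hEq)
    · rintro ⟨hx, hne'⟩
      refine ⟨(hmem x).1 hx, ?_⟩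
      intro hEq
      exact hne' (by rw [← hc, hEq])
  have hSne : S.Nonempty := by
    obtain ⟨z, hz, hzne⟩ := hne
    exact ⟨z, hz, hzne⟩
  have hSbdd : BddAbove S := ⟨b, fun x hx => le_of_lt hx.1.2⟩
  have himg : f '' S = S := by
    apply Set.eq_of_subset_of_subset
    · rintro y ⟨x, hx, rfl⟩
      exact (hkey x).1 hx
    · intro y hy
      obtain ⟨x, rfl⟩ := hf.2.1.2 y
      exact ⟨x, (hkey x).2 hy, rfl⟩
  have hsup : sSup S ∈ Set.Ioo a b := hcl (csSup_mem_closure hSne hSbdd)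
  have : f (sSup S) = sSup S := by
    rw [hmono.monotone.map_csSup_of_continuousAt hcont.continuousAt hSne hSbdd, himg]
  exact hforb.2.1 hsup this
end

section
/- Let G be a subgroup of Homeo⁺([0,1]), O an open interval that is an orbital of G (a maximal interval of the support of G), and x < y two points of O. Then there exists g ∈ G with g(x) > y. -/
/-- `G` is a group of homeomorphisms under composition. -/
def IsFuncSubgroup (G : Set (ℝ → ℝ)) : Prop :=
  id ∈ G ∧ (∀ f ∈ G, ∀ g ∈ G, f ∘ g ∈ G) ∧ ∀ f ∈ G, ∃ g ∈ G, f ∘ g = id ∧ g ∘ f = id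

/-- `O` is an orbital of the group `G`: a maximal open interval contained in the
support of `G`. -/
def IsGroupOrbital (G : Set (ℝ → ℝ)) (O : Set ℝ) : Prop :=
  (∃ a b : ℝ, a < b ∧ O = Set.Ioo a b) ∧ O ⊆ {x | ∃ g ∈ G, g x ≠ x} ∧
    ∀ B : Set ℝ, (∃ a b : ℝ, a < b ∧ B = Set.Ioo a b) →
      B ⊆ {x | ∃ g ∈ G, g x ≠ x} → O ⊆ B → O = B

/-- If `O` is an orbital of a subgroup `G` of `Homeo⁺([0,1])` and `x < y` are points
of `O`, then some `g ∈ G` moves `x` beyond `y`. -/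
theorem stmt11 (G : Set (ℝ → ℝ)) (hG : ∀ g ∈ G, IsHomeoI g) (hsub : IsFuncSubgroup G)
    (O : Set ℝ) (hO : IsGroupOrbital G O)
    (x y : ℝ) (hx : x ∈ O) (hy : y ∈ O) (hxy : x < y) :
    ∃ g ∈ G, y < g x := by
  by_contra hcon
  push_neg at hcon
  obtain ⟨hid, hcomp, hinv⟩ := hsub
  set S : Set ℝ := {z | ∃ g ∈ G, g x = z} with hS
  have hne : S.Nonempty := ⟨x, id, hid, rfl⟩
  have hbdd : BddAbove S := ⟨y, by rintro z ⟨g, hg, rfl⟩; exact hcon g hg⟩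
  set z := sSup S with hz
  have hxz : x ≤ z := le_csSup hbdd ⟨id, hid, rfl⟩
  have hzy : z ≤ y := csSup_le hne (by rintro w ⟨g, hg, rfl⟩; exact hcon g hg)
  -- z is fixed by all g ∈ G
  have hfix : ∀ g ∈ G, g z = z := by
    have key : ∀ g ∈ G, g z ≤ z := by
      intro g hg
      obtain ⟨hmono, hbij, hcont, -⟩ := hG g hg
      have hmap : g z = sSup (g '' S) :=
        hmono.monotone.map_csSup_of_continuousAt (hcont.continuousAt) hne hbdd
      rw [hmap]
      apply csSup_le (hne.image g)
      rintro w ⟨u, ⟨h, hh, rfl⟩, rfl⟩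
      exact le_csSup hbdd ⟨g ∘ h, hcomp g hg h hh, rfl⟩
    intro g hg
    obtain ⟨g', hg', hgg', hg'g⟩ := hinv g hg
    have h1 : g z ≤ z := key g hg
    have h2 : g' z ≤ z := key g' hg'
    have hmono := (hG g hg).1
    have : g (g' z) ≤ g z := hmono.monotone h2
    have hgg'z : g (g' z) = z := congrFun hgg' z
    linarith
  -- z ∈ O, contradiction with support
  obtain ⟨⟨a, b, hab, hOab⟩, hsupp, -⟩ := hO
  have hzO : z ∈ O := by
    rw [hOab] at hx hy ⊢
    exact ⟨lt_of_lt_of_le hx.1 hxz, lt_of_le_of_lt hzy hy.2⟩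
  obtain ⟨g, hg, hgz⟩ := hsupp hzO
  exact hgz (hfix g hg)
end

section
/- If O_{a₁} ⊂ O_{a₂} ⊂ ⋯ ⊂ O_{a_n} is a proper chain where O_{a_i} is an orbital of a_i ∈ PLo(I), and the group generated by a₁,…,a_n has no transition chains (equivalently, intersecting element orbitals are nested), then O_{a_n} is an orbital of the product a₁a₂⋯a_n. -/
/-!
Induction on `n` reduces the theorem to two factors: if `A ⊂ B` are orbitals of `f` and `g` in a
group of homeomorphisms with no transition chains, then `B` is an orbital of `f * g`.

The endpoints of `B` are fixed by `f`: an `f`-orbital through one of them would meet `B`, hence be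
nested with it, and it cannot contain `B ⊃ A` without equalling `A`. So `f * g` fixes the endpoints
of `B`. Suppose `f (g x) = x` for some `x ∈ B`. The `f`-orbital `A'` through `g x ∈ B` contains
`x`, and by the same nesting argument it is a proper subinterval of `B`. At an endpoint `e ∈ B` of
`A'`, `f` fixes `e` but `g` does not, so `f * g` moves `e`. The `f * g`-orbital `C` through `e`
meets `A'`, yet `C ⊄ A'` as `e ∉ A'`, and `A' ⊄ C` as `x ∈ A'` is fixed by `f * g`.
-/

open Set

section Orbital

variable {f : ℝ → ℝ} {A : Set ℝ}

lemma IsOrbital.isOpen (h : IsOrbital f A) : IsOpen A := by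
  obtain ⟨p, q, -, rfl⟩ := h.1
  exact isOpen_Ioo

lemma IsOrbital.nonempty (h : IsOrbital f A) : A.Nonempty := by
  obtain ⟨p, q, hpq, rfl⟩ := h.1
  exact nonempty_Ioo.2 hpq

/-- The union of two overlapping open intervals is again an open interval. -/
lemma IsOrbital.Ioo_subset_of_inter_nonempty (h : IsOrbital f A) {c d : ℝ}
    (hsupp : Ioo c d ⊆ {x | f x ≠ x}) (hne : (A ∩ Ioo c d).Nonempty) : Ioo c d ⊆ A := by
  obtain ⟨a, b, hab, rfl⟩ := h.1
  obtain ⟨z, hz, hz'⟩ := hne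
  have hunion := Ioo_union_Ioo' (hz'.1.trans hz.2) (hz.1.trans hz'.2)
  have hlt : min a c < max b d := (min_le_left a c).trans_lt (hab.trans_le (le_max_left b d))
  have heq := h.2.2 _ ⟨_, _, hlt, hunion⟩ (union_subset h.2.1 hsupp) subset_union_left
  exact subset_union_right.trans heq.symm.subset

lemma IsOrbital.eq_of_inter_nonempty {A' : Set ℝ} (h : IsOrbital f A) (h' : IsOrbital f A')
    (hne : (A ∩ A').Nonempty) : A = A' := by
  obtain ⟨a, b, -, rfl⟩ := h.1
  obtain ⟨c, d, -, rfl⟩ := h'.1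
  exact (h'.Ioo_subset_of_inter_nonempty h.2.1 (inter_comm _ _ ▸ hne)).antisymm
    (h.Ioo_subset_of_inter_nonempty h'.2.1 hne)

lemma IsOrbital.apply_eq_of_mem_frontier (hf : Continuous f) (h : IsOrbital f A) {e : ℝ}
    (he : e ∈ frontier A) : f e = e := by
  by_contra hfe
  obtain ⟨δ, hδ, hball⟩ := Metric.isOpen_iff.1 (isOpen_ne_fun hf continuous_id) e hfe
  rw [Real.ball_eq_Ioo] at hball
  rw [h.isOpen.frontier_eq] at he
  have he_mem : e ∈ Ioo (e - δ) (e + δ) := ⟨by linarith, by linarith⟩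
  have hne := mem_closure_iff.1 he.1 _ isOpen_Ioo he_mem
  exact he.2 (h.Ioo_subset_of_inter_nonempty hball (inter_comm _ _ ▸ hne) he_mem)

lemma isOrbital_Ioo_of_apply_eq {p q : ℝ} (hpq : p < q) (hsupp : Ioo p q ⊆ {x | f x ≠ x})
    (hp : f p = p) (hq : f q = q) : IsOrbital f (Ioo p q) := by
  refine ⟨⟨p, q, hpq, rfl⟩, hsupp, ?_⟩
  rintro _ ⟨c, d, -, rfl⟩ hcd_supp hsub
  obtain ⟨hcp, hqd⟩ := (Ioo_subset_Ioo_iff hpq).1 hsub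
  have hc : c = p := hcp.eq_of_not_lt fun hcp => hcd_supp ⟨hcp, hpq.trans_le hqd⟩ hp
  have hd : q = d := hqd.eq_of_not_lt fun hqd => hcd_supp ⟨hc.le.trans_lt hpq, hqd⟩ hq
  rw [hc, hd]

lemma IsOrbital.apply_mem (hf : StrictMono f) (hc : Continuous f) (h : IsOrbital f A) {y : ℝ}
    (hy : y ∈ A) : f y ∈ A := by
  obtain ⟨p, q, hpq, rfl⟩ := h.1
  have hp := h.apply_eq_of_mem_frontier hc (by rw [frontier_Ioo hpq]; exact Or.inl rfl)
  have hq := h.apply_eq_of_mem_frontier hc (by rw [frontier_Ioo hpq]; exact Or.inr rfl)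
  exact ⟨hp.symm.trans_lt (hf hy.1), (hf hy.2).trans_eq hq⟩

/-- The orbital through `y` runs from the last fixed point below `y` to the first one above it. -/
lemma exists_isOrbital_mem (hf : Continuous f) (hb : Bornology.IsBounded {x | f x ≠ x})
    {y : ℝ} (hy : f y ≠ y) : ∃ p q, IsOrbital f (Ioo p q) ∧ y ∈ Ioo p q := by
  have hfix : IsClosed {x | f x = x} := isClosed_eq hf continuous_id
  obtain ⟨m, hm⟩ := hb.bddBelow
  obtain ⟨M, hM⟩ := hb.bddAbove
  have hlow : f (min y m - 1) = min y m - 1 := by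
    by_contra h
    linarith [hm h, min_le_right y m]
  have hhigh : f (max y M + 1) = max y M + 1 := by
    by_contra h
    linarith [hM h, le_max_right y M]
  set L := Iic y ∩ {x | f x = x}
  set R := Ici y ∩ {x | f x = x}
  have hL_bdd : BddAbove L := ⟨y, fun _ hz => hz.1⟩
  have hR_bdd : BddBelow R := ⟨y, fun _ hz => hz.1⟩
  have hpL : sSup L ∈ L := (isClosed_Iic.inter hfix).csSup_mem
    ⟨min y m - 1, mem_Iic.2 (by linarith [min_le_left y m]), hlow⟩ hL_bdd
  have hqR : sInf R ∈ R := (isClosed_Ici.inter hfix).csInf_mem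
    ⟨max y M + 1, mem_Ici.2 (by linarith [le_max_left y M]), hhigh⟩ hR_bdd
  have hpy : sSup L < y := hpL.1.lt_of_ne fun h => hy (h ▸ hpL.2)
  have hyq : y < sInf R := hqR.1.lt_of_ne' fun h => hy (h ▸ hqR.2)
  refine ⟨_, _, isOrbital_Ioo_of_apply_eq (hpy.trans hyq) ?_ hpL.2 hqR.2, hpy, hyq⟩
  intro z hz hfz
  rcases le_total z y with hzy | hyz
  · exact hz.1.not_ge (le_csSup hL_bdd ⟨hzy, hfz⟩)
  · exact hz.2.not_ge (csInf_le hR_bdd ⟨hyz, hfz⟩)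

end Orbital

lemma frontier_Ioo_inter_nonempty_of_ssubset {u v α β : ℝ} (huv : u < v)
    (h : Ioo u v ⊂ Ioo α β) : (frontier (Ioo u v) ∩ Ioo α β).Nonempty := by
  obtain ⟨hαu, hvβ⟩ := (Ioo_subset_Ioo_iff huv).1 h.subset
  rw [frontier_Ioo huv]
  rcases hαu.lt_or_eq with hαu | rfl
  · exact ⟨u, Or.inl rfl, hαu, huv.trans_le hvβ⟩
  · rcases hvβ.lt_or_eq with hvβ | rfl
    · exact ⟨v, Or.inr rfl, huv, hvβ⟩
    · exact absurd rfl h.ne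

def strictMonoBoundedSupport : Subgroup (Equiv.Perm ℝ) where
  carrier := {f | StrictMono f ∧ Bornology.IsBounded {x | f x ≠ x}}
  mul_mem' := by
    rintro f g ⟨hf, hfb⟩ ⟨hg, hgb⟩
    refine ⟨hf.comp hg, (hfb.union hgb).subset fun x hx => ?_⟩
    by_contra hx'
    simp only [mem_union, mem_ofPred_eq, not_or, not_not] at hx'
    exact hx (by rw [Equiv.Perm.mul_apply, hx'.2, hx'.1])
  one_mem' := ⟨strictMono_id, by simp⟩
  inv_mem' := by
    rintro f ⟨hf, hfb⟩
    refine ⟨fun x y hxy => ?_, ?_⟩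
    · rw [← hf.lt_iff_lt]
      simpa using hxy
    · convert hfb using 1
      ext x
      rw [mem_ofPred_eq, mem_ofPred_eq, ne_eq, Equiv.Perm.inv_eq_iff_eq, eq_comm]

lemma IsPLo.mem_strictMonoBoundedSupport {f : Equiv.Perm ℝ} (hf : IsPLo f) :
    f ∈ strictMonoBoundedSupport := by
  refine ⟨hf.1, (Metric.isBounded_Icc (0 : ℝ) 1).subset fun x hx => ?_⟩
  by_contra hx'
  rw [mem_Icc, not_and_or, not_le, not_le] at hx'
  exact hx (hf.2.2.2.2.1 x (hx'.imp le_of_lt le_of_lt))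

lemma continuous_of_mem_strictMonoBoundedSupport {f : Equiv.Perm ℝ}
    (hf : f ∈ strictMonoBoundedSupport) : Continuous f :=
  hf.1.monotone.continuous_of_surjective f.surjective

def NoTransitionChains (S : Set (Equiv.Perm ℝ)) : Prop :=
  ∀ f ∈ S, ∀ g ∈ S, ∀ A B : Set ℝ, IsOrbital f A → IsOrbital g B → (A ∩ B).Nonempty →
    A ⊆ B ∨ B ⊆ A

namespace NoTransitionChains

variable {H : Subgroup (Equiv.Perm ℝ)} {f g : Equiv.Perm ℝ} {A B : Set ℝ}

lemma subset_of_ssubset {S : Set (Equiv.Perm ℝ)} (hS : NoTransitionChains S) (hf : f ∈ S)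
    (hg : g ∈ S) (hA : IsOrbital f A) (hB : IsOrbital g B) (hAB : A ⊂ B) {C : Set ℝ}
    (hC : IsOrbital f C) (hCB : (C ∩ B).Nonempty) : C ⊆ B := by
  refine (hS f hf g hg C B hC hB hCB).resolve_right fun hBC => hAB.not_subset ?_
  have hAC : A = C :=
    hA.eq_of_inter_nonempty hC (hA.nonempty.mono (subset_inter subset_rfl (hAB.subset.trans hBC)))
  exact hAC ▸ hBC

lemma apply_eq_of_mem_frontier {S : Set (Equiv.Perm ℝ)} (hS : NoTransitionChains S)
    (hf : f ∈ S) (hg : g ∈ S) (hfP : f ∈ strictMonoBoundedSupport) (hA : IsOrbital f A)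
    (hB : IsOrbital g B) (hAB : A ⊂ B) {e : ℝ} (he : e ∈ frontier B) : f e = e := by
  by_contra hfe
  obtain ⟨p, q, hC, heC⟩ :=
    exists_isOrbital_mem (continuous_of_mem_strictMonoBoundedSupport hfP) hfP.2 hfe
  rw [hB.isOpen.frontier_eq] at he
  exact he.2 (hS.subset_of_ssubset hf hg hA hB hAB hC
    (mem_closure_iff.1 he.1 _ isOpen_Ioo heC) heC)

lemma mul_apply_ne (hH : NoTransitionChains H) (hHP : H ≤ strictMonoBoundedSupport)
    (hf : f ∈ H) (hg : g ∈ H) (hA : IsOrbital f A) (hB : IsOrbital g B) (hAB : A ⊂ B) {x : ℝ}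
    (hx : x ∈ B) : (f * g) x ≠ x := by
  have hfg := H.mul_mem hf hg
  have hfc := continuous_of_mem_strictMonoBoundedSupport (hHP hf)
  have hgc := continuous_of_mem_strictMonoBoundedSupport (hHP hg)
  intro hfgx
  have hgx : g x ≠ x := hB.2.1 hx
  obtain ⟨u, v, hA', hgxA'⟩ :=
    exists_isOrbital_mem hfc (hHP hf).2 (show f (g x) ≠ g x from hfgx.trans_ne hgx.symm)
  have hxA' : x ∈ Ioo u v := hfgx ▸ hA'.apply_mem (hHP hf).1 hfc hgxA'
  obtain ⟨α, β, -, rfl⟩ := hB.1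
  have hA'B : Ioo u v ⊆ Ioo α β := hH.subset_of_ssubset hf hg hA hB hAB hA'
    ⟨g x, hgxA', hB.apply_mem (hHP hg).1 hgc hx⟩
  have hA'ne : Ioo u v ≠ Ioo α β := fun h => hAB.ne
    (hA.eq_of_inter_nonempty (h ▸ hA') (hA.nonempty.mono (subset_inter subset_rfl hAB.subset)))
  obtain ⟨e, heA', heB⟩ := frontier_Ioo_inter_nonempty_of_ssubset
    (nonempty_Ioo.1 ⟨x, hxA'⟩) (hA'B.ssubset_of_ne hA'ne)
  have hfe : f e = e := hA'.apply_eq_of_mem_frontier hfc heA'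
  have hfge : (f * g) e ≠ e := fun h => hB.2.1 heB (f.injective (h.trans hfe.symm))
  obtain ⟨s, t, hC, heC⟩ := exists_isOrbital_mem
    (continuous_of_mem_strictMonoBoundedSupport (hHP hfg)) (hHP hfg).2 hfge
  rw [isOpen_Ioo.frontier_eq] at heA'
  rcases hH _ hfg f hf _ _ hC hA' (mem_closure_iff.1 heA'.1 _ isOpen_Ioo heC) with h | h
  · exact heA'.2 (h heC)
  · exact hC.2.1 (h hxA') hfgx

theorem isOrbital_mul (hH : NoTransitionChains H) (hHP : H ≤ strictMonoBoundedSupport)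
    (hf : f ∈ H) (hg : g ∈ H) (hA : IsOrbital f A) (hB : IsOrbital g B) (hAB : A ⊂ B) :
    IsOrbital ⇑(f * g) B := by
  have hfix : ∀ e ∈ frontier B, (f * g) e = e := fun e he => by
    rw [Equiv.Perm.mul_apply,
      hB.apply_eq_of_mem_frontier (continuous_of_mem_strictMonoBoundedSupport (hHP hg)) he,
      hH.apply_eq_of_mem_frontier hf hg (hHP hf) hA hB hAB he]
  obtain ⟨α, β, hαβ, rfl⟩ := hB.1
  exact isOrbital_Ioo_of_apply_eq hαβ (fun x hx => hH.mul_apply_ne hHP hf hg hA hB hAB hx)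
    (hfix α (by simp [frontier_Ioo hαβ])) (hfix β (by simp [frontier_Ioo hαβ]))

theorem isOrbital_prod_ofFn (hH : NoTransitionChains H) (hHP : H ≤ strictMonoBoundedSupport)
    {n : ℕ} {a : Fin (n + 1) → Equiv.Perm ℝ} {O : Fin (n + 1) → Set ℝ} (ha : ∀ i, a i ∈ H)
    (horb : ∀ i, IsOrbital ⇑(a i) (O i)) (hsub : ∀ i < Fin.last n, O i ⊂ O (Fin.last n)) :
    IsOrbital ⇑(List.ofFn a).prod (O (Fin.last n)) := by
  induction n with
  | zero => simpa using horb 0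
  | succ n ih =>
    have htail := ih (O := fun i => O i.succ) (fun i => ha i.succ) (fun i => horb i.succ)
      fun i hi => by simpa [Fin.succ_last] using hsub i.succ (by simpa [← Fin.succ_last] using hi)
    rw [Fin.succ_last] at htail
    rw [List.ofFn_succ, List.prod_cons]
    have htail_mem : (List.ofFn fun i : Fin (n + 1) => a i.succ).prod ∈ H :=
      H.list_prod_mem (List.forall_mem_ofFn_iff.2 fun i => ha i.succ)
    exact hH.isOrbital_mul hHP (ha 0) htail_mem (horb 0) htail (hsub 0 Fin.last_pos)

end NoTransitionChains

/-- If `O₁ ⊂ O₂ ⊂ ⋯ ⊂ O_n` is a proper chain of orbitals of `a₁,…,a_n ∈ PLo(I)` and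
the group generated by the `aᵢ` has no transition chains (intersecting element
orbitals are nested), then `O_n` is an orbital of the product `a₁a₂⋯a_n`. -/
theorem stmt12 (n : ℕ) (hn : 0 < n) (a : Fin n → Equiv.Perm ℝ) (O : Fin n → Set ℝ)
    (hPL : ∀ i, IsPLo ⇑(a i))
    (horb : ∀ i, IsOrbital ⇑(a i) (O i))
    (hchain : ∀ i j : Fin n, i < j → O i ⊂ O j)
    (hntc : ∀ f ∈ Subgroup.closure (Set.range a), ∀ g ∈ Subgroup.closure (Set.range a),
      ∀ A B : Set ℝ, IsOrbital ⇑f A → IsOrbital ⇑g B → (A ∩ B).Nonempty →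
        A ⊆ B ∨ B ⊆ A) :
    IsOrbital ⇑((List.ofFn a).prod) (O ⟨n - 1, by omega⟩) := by
  cases n with
  | zero => omega
  | succ m =>
    have hHP : Subgroup.closure (range a) ≤ strictMonoBoundedSupport :=
      (Subgroup.closure_le _).2 (range_subset_iff.2 fun i => (hPL i).mem_strictMonoBoundedSupport)
    exact NoTransitionChains.isOrbital_prod_ofFn hntc hHP
      (fun i => Subgroup.subset_closure ⟨i, rfl⟩) horb fun i hi => hchain i _ hi
end
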